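/- arXiv:1907.12754 — 2 statements merged into one kernel-verified Lean document; each statement's English description precedes it below -/
import Mathlib

section
/- Let K be a field, let g ∈ K[z] be a polynomial of degree t ≥ 1, and let α_1, …, α_n be distinct elements of K with g(α_i) ≠ 0 for all i. Then every nonzero codeword c of the Goppa code Γ(L, g) (with c_i ∈ K) has Hamming weight at least t + 1; in particular the minimum distance of Γ(L, g) is at least t + 1. -/
/-!
Let `S` be the support of `c`. Multiplying the syndrome `∑ c_i / (X - α_i)` by the error locator
`σ = ∏_{i ∈ S} (X - α_i)` gives `g ∣ ω` for `ω = ∑_{i ∈ S} c_i ∏_{j ∈ S, j ≠ i} (X - α_j)`. Since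
`ω(α_i) = c_i ∏_{j ≠ i} (α_i - α_j) ≠ 0`, `ω` is nonzero of degree `< |S|`, so `deg g < |S|`.
-/

open Polynomial Lagrange Finset

theorem isUnit_mk_span_singleton_of_isCoprime {R : Type*} [CommRing R] {a b : R}
    (h : IsCoprime a b) : IsUnit (Ideal.Quotient.mk (Ideal.span {b}) a) := by
  obtain ⟨u, v, huv⟩ := h
  refine .of_mul_eq_one (Ideal.Quotient.mk _ u) ?_
  have hb : Ideal.Quotient.mk (Ideal.span {b}) b = 0 :=
    Ideal.Quotient.eq_zero_iff_mem.mpr (Ideal.mem_span_singleton_self b)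
  simpa [mul_comm, hb] using congrArg (Ideal.Quotient.mk (Ideal.span {b})) huv

theorem isCoprime_X_sub_C_of_eval_ne_zero {K : Type*} [Field K] {a : K} {g : K[X]}
    (h : g.eval a ≠ 0) : IsCoprime (X - C a) g :=
  (irreducible_X_sub_C a).coprime_iff_not_dvd.mpr fun hdvd => h (dvd_iff_isRoot.mp hdvd)

namespace Lagrange

variable {R ι : Type*} [CommRing R] [DecidableEq ι]

/-- The error evaluator of Goppa decoding, `nodal s v` being the error locator. -/
noncomputable def errorEvaluator (s : Finset ι) (v : ι → R) (c : ι → R) : R[X] :=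
  ∑ i ∈ s, C (c i) * nodal (s.erase i) v

variable {s : Finset ι} {v : ι → R}

theorem mk_errorEvaluator {I : Ideal R[X]}
    (hv : ∀ i ∈ s, IsUnit (Ideal.Quotient.mk I (X - C (v i)))) (c : ι → R) :
    Ideal.Quotient.mk I (errorEvaluator s v c) =
      (∑ i ∈ s, Ideal.Quotient.mk I (C (c i)) * Ring.inverse (Ideal.Quotient.mk I (X - C (v i)))) *
        Ideal.Quotient.mk I (nodal s v) := by
  rw [errorEvaluator, map_sum, sum_mul]
  refine sum_congr rfl fun i hi => ?_
  rw [nodal_eq_mul_nodal_erase hi, map_mul, map_mul, mul_assoc,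
    Ring.inverse_mul_cancel_left _ _ (hv i hi)]

theorem natDegree_errorEvaluator_le [Nontrivial R] (c : ι → R) :
    (errorEvaluator s v c).natDegree ≤ #s - 1 := by
  refine natDegree_sum_le_of_forall_le _ _ fun i hi => ?_
  refine (natDegree_C_mul_le _ _).trans ?_
  rw [natDegree_nodal, card_erase_of_mem hi]

theorem eval_errorEvaluator {i : ι} (hi : i ∈ s) (c : ι → R) :
    (errorEvaluator s v c).eval (v i) = c i * (nodal (s.erase i) v).eval (v i) := by
  rw [errorEvaluator, eval_finsetSum, sum_eq_single_of_mem i hi, eval_mul, eval_C]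
  intro j _ hji
  rw [eval_mul, eval_nodal_at_node (mem_erase.mpr ⟨hji.symm, hi⟩), mul_zero]

theorem errorEvaluator_ne_zero [IsDomain R] (hvs : Set.InjOn v s) {i : ι} (hi : i ∈ s)
    {c : ι → R} (hc : c i ≠ 0) : errorEvaluator s v c ≠ 0 := by
  intro h
  have hnodal : (nodal (s.erase i) v).eval (v i) ≠ 0 :=
    eval_nodal_not_at_node fun j hj hij =>
      (mem_erase.mp hj).1 (hvs (mem_of_mem_erase hj) hi hij.symm)
  exact mul_ne_zero hc hnodal (by rw [← eval_errorEvaluator hi, h, eval_zero])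

end Lagrange

theorem natDegree_lt_card_of_goppa_syndrome_eq_zero {K ι : Type*} [Field K] [DecidableEq ι]
    {g : K[X]} {s : Finset ι} {v : ι → K} (hvs : Set.InjOn v s)
    (hg : ∀ i ∈ s, g.eval (v i) ≠ 0) {c : ι → K} (hc : ∀ i ∈ s, c i ≠ 0) (hs : s.Nonempty)
    (hsyn : ∑ i ∈ s, Ideal.Quotient.mk (Ideal.span {g}) (C (c i)) *
        Ring.inverse (Ideal.Quotient.mk (Ideal.span {g}) (X - C (v i))) = 0) :
    g.natDegree < #s := by
  obtain ⟨i, hi⟩ := hs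
  have hdvd : g ∣ errorEvaluator s v c := by
    rw [← Ideal.mem_span_singleton, ← Ideal.Quotient.eq_zero_iff_mem,
      mk_errorEvaluator (fun i hi => isUnit_mk_span_singleton_of_isCoprime
        (isCoprime_X_sub_C_of_eval_ne_zero (hg i hi))), hsyn, zero_mul]
  calc g.natDegree ≤ (errorEvaluator s v c).natDegree :=
        natDegree_le_of_dvd hdvd (errorEvaluator_ne_zero hvs hi (hc i hi))
    _ ≤ #s - 1 := natDegree_errorEvaluator_le c
    _ < #s := Nat.sub_lt (card_pos.mpr ⟨i, hi⟩) one_pos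

theorem stmt12_general {K : Type*} [Field K] [DecidableEq K] {n t : ℕ} (g : K[X]) (hdeg : g.natDegree = t)
    (α : Fin n → K) (hinj : Function.Injective α)
    (hα : ∀ i, g.eval (α i) ≠ 0) (c : Fin n → K) (hc : c ≠ 0)
    (hmem : ∑ i, Ideal.Quotient.mk (Ideal.span {g}) (C (c i)) *
        Ring.inverse (Ideal.Quotient.mk (Ideal.span {g}) (X - C (α i))) = 0) :
    t + 1 ≤ hammingNorm c := by
  set S : Finset (Fin n) := {i | c i ≠ 0}
  have hsyn : ∑ i ∈ S, Ideal.Quotient.mk (Ideal.span {g}) (C (c i)) *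
      Ring.inverse (Ideal.Quotient.mk (Ideal.span {g}) (X - C (α i))) = 0 := by
    rw [← hmem]
    refine sum_filter_of_ne fun i _ hi hci => hi ?_
    rw [hci, map_zero, map_zero, zero_mul]
  obtain ⟨i, hi⟩ := Function.ne_iff.mp hc
  have hS : S.Nonempty := ⟨i, mem_filter.mpr ⟨mem_univ i, hi⟩⟩
  exact hdeg ▸ natDegree_lt_card_of_goppa_syndrome_eq_zero hinj.injOn (fun i _ => hα i)
    (fun i hi => (mem_filter.mp hi).2) hS hsyn

/-- Every nonzero codeword of the Goppa code `Γ(L, g)` with `deg g = t ≥ 1` has Hamming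
weight at least `t + 1`. -/
theorem stmt12 {K : Type*} [Field K] [DecidableEq K] {n t : ℕ} (g : K[X]) (hdeg : g.natDegree = t)
    (ht : 1 ≤ t) (α : Fin n → K) (hinj : Function.Injective α)
    (hα : ∀ i, g.eval (α i) ≠ 0) (c : Fin n → K) (hc : c ≠ 0)
    (hmem : ∑ i, Ideal.Quotient.mk (Ideal.span {g}) (C (c i)) *
        Ring.inverse (Ideal.Quotient.mk (Ideal.span {g}) (X - C (α i))) = 0) :
    t + 1 ≤ hammingNorm c :=
  stmt12_general g hdeg α hinj hα c hc hmem
end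

section
/- Let k ⊆ K be fields with K a finite extension of k of degree m, let g ∈ K[z] be a polynomial of degree t ≥ 1, and let α_1, …, α_n be distinct elements of K with g(α_i) ≠ 0 for all i. Then the Goppa code Γ(L, g) ∩ k^n, i.e. the set of vectors c = (c_1, …, c_n) with all c_i ∈ k satisfying Σ_{i=1}^n c_i·(z − α_i)^{−1} = 0 in K[z]/⟨g(z)⟩, is a k-linear subspace of k^n of dimension at least n − m·t over k. -/
open Polynomial

/-!
The subfield subcode `Γ(L, g) ∩ kⁿ` is the kernel of the `k`-linear syndrome map
`c ↦ ∑ cᵢ (z - αᵢ)⁻¹` from `kⁿ` to `K[z]/⟨g⟩`. The target has `k`-dimension `m t` by the tower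
law, so rank–nullity bounds the kernel's dimension from below by `n - m t`.
-/

theorem LinearMap.finrank_sub_finrank_le_finrank_ker {k V W : Type*} [DivisionRing k]
    [AddCommGroup V] [Module k V] [AddCommGroup W] [Module k W]
    [FiniteDimensional k V] [FiniteDimensional k W] (f : V →ₗ[k] W) :
    Module.finrank k V - Module.finrank k W ≤ Module.finrank k (LinearMap.ker f) := by
  have := f.finrank_range_add_finrank_ker
  have := Submodule.finrank_le (LinearMap.range f)
  omega

section Goppa

variable (k : Type*) {K : Type*} [Field k] [Field K] [Algebra k K]

theorem finrank_adjoinRoot {g : K[X]} (hg : g ≠ 0) :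
    Module.finrank k (AdjoinRoot g) = Module.finrank k K * g.natDegree := by
  rw [← Module.finrank_mul_finrank k K (AdjoinRoot g), (AdjoinRoot.powerBasis hg).finrank,
    AdjoinRoot.powerBasis_dim]

noncomputable def goppaSyndrome {n : ℕ} (g : K[X]) (α : Fin n → K) :
    (Fin n → k) →ₗ[k] AdjoinRoot g :=
  Fintype.linearCombination k fun i => Ring.inverse (AdjoinRoot.mk g (X - C (α i)))

theorem coe_ker_goppaSyndrome {n : ℕ} (g : K[X]) (α : Fin n → K) :
    (LinearMap.ker (goppaSyndrome k g α) : Set (Fin n → k)) = {c : Fin n → k |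
      ∑ i, Ideal.Quotient.mk (Ideal.span {g}) (C (algebraMap k K (c i))) *
        Ring.inverse (Ideal.Quotient.mk (Ideal.span {g}) (X - C (α i))) = 0} := by
  ext c
  simp only [SetLike.mem_coe, LinearMap.mem_ker, goppaSyndrome, Fintype.linearCombination_apply,
    Algebra.smul_def]
  rfl

end Goppa

theorem stmt13_general {k K : Type*} [Field k] [Field K] [Algebra k K] [FiniteDimensional k K]
    {m n t : ℕ} (hm : Module.finrank k K = m)
    (g : K[X]) (hdeg : g.natDegree = t) (ht : 1 ≤ t)
    (α : Fin n → K) :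
    ∃ W : Submodule k (Fin n → k),
      (↑W = {c : Fin n → k |
        ∑ i, Ideal.Quotient.mk (Ideal.span {g}) (C (algebraMap k K (c i))) *
          Ring.inverse (Ideal.Quotient.mk (Ideal.span {g}) (X - C (α i))) = 0}) ∧
      n - m * t ≤ Module.finrank k W := by
  have hg : g ≠ 0 := ne_zero_of_natDegree_gt (n := 0) (by omega)
  have : FiniteDimensional K (AdjoinRoot g) := (AdjoinRoot.powerBasis hg).finite
  have : FiniteDimensional k (AdjoinRoot g) := .trans k K (AdjoinRoot g)
  refine ⟨LinearMap.ker (goppaSyndrome k g α), coe_ker_goppaSyndrome k g α, ?_⟩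
  simpa [finrank_adjoinRoot k hg, hm, hdeg] using
    (goppaSyndrome k g α).finrank_sub_finrank_le_finrank_ker

/-- For a degree-`m` field extension `k ⊆ K` and Goppa data `(g, α)` with `deg g = t ≥ 1`,
the restriction `Γ(L, g) ∩ k^n` is a `k`-linear subspace of `k^n` of dimension at least
`n - m·t`. -/
theorem stmt13 {k K : Type*} [Field k] [Field K] [Algebra k K] [FiniteDimensional k K]
    {m n t : ℕ} (hm : Module.finrank k K = m)
    (g : K[X]) (hdeg : g.natDegree = t) (ht : 1 ≤ t)
    (α : Fin n → K) (hinj : Function.Injective α) (hα : ∀ i, g.eval (α i) ≠ 0) :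
    ∃ W : Submodule k (Fin n → k),
      (↑W = {c : Fin n → k |
        ∑ i, Ideal.Quotient.mk (Ideal.span {g}) (C (algebraMap k K (c i))) *
          Ring.inverse (Ideal.Quotient.mk (Ideal.span {g}) (X - C (α i))) = 0}) ∧
      n - m * t ≤ Module.finrank k W :=
  stmt13_general hm g hdeg ht α
end
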